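/- Let τ < 0 and c ∈ ℝ, and define v : ℝ → ℝ by v(s) = (2c/τ)·(1 − cosh(√(−τ)·s)) + 1. Then v(s) ≠ 0 for every s ∈ ℝ if and only if c ≥ 0. Moreover, if c ≥ 0 then v(s) ≥ 1 for all s ∈ ℝ. -/

import Mathlib

open Real

theorem singular_set_empty_iff_tau_neg
    (τ : ℝ) (hτ : τ < 0) (c : ℝ)
    (v : ℝ → ℝ)
    (hv : ∀ s : ℝ, v s = (2 * c / τ) * (1 - Real.cosh (Real.sqrt (-τ) * s)) + 1) :
    ((∀ s : ℝ, v s ≠ 0) ↔ 0 ≤ c) ∧ (0 ≤ c → ∀ s : ℝ, 1 ≤ v s) := by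
  have hτ0 : τ ≠ 0 := ne_of_lt hτ
  have hsq : (0:ℝ) < Real.sqrt (-τ) := Real.sqrt_pos.mpr (by linarith)
  have hge : 0 ≤ c → ∀ s : ℝ, 1 ≤ v s := by
    intro hc s
    rw [hv s]
    have h1 : Real.cosh (Real.sqrt (-τ) * s) ≥ 1 := Real.one_le_cosh _
    have h2 : 2 * c / τ ≤ 0 := div_nonpos_of_nonneg_of_nonpos (by linarith) (le_of_lt hτ)
    nlinarith
  refine ⟨⟨?_, fun hc s => by have := hge hc s; linarith⟩, hge⟩
  intro hne
  by_contra hc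
  push_neg at hc
  set k := 2 * c / τ with hk
  have hkpos : 0 < k := div_pos_of_neg_of_neg (by linarith) hτ
  -- choose x₀ = 1 + 2/k, then cosh x₀ ≥ (1+x₀)/2 = 1 + 1/k
  set x₀ : ℝ := 1 + 2 / k with hx₀
  clear_value k
  have hx₀pos : 0 < x₀ := by positivity
  clear_value x₀
  have hcosh : 1 + 1 / k ≤ Real.cosh x₀ := by
    have h1 : x₀ + 1 ≤ Real.exp x₀ := Real.add_one_le_exp x₀
    have h2 : 0 < Real.exp (-x₀) := Real.exp_pos _
    have h4 : x₀ + 1 = 2 * (1 + 1 / k) := by rw [hx₀]; ring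
    have h3 : (2:ℝ) / k = 2 * (1 / k) := by ring
    rw [Real.cosh_eq]
    linarith
  set s₀ : ℝ := x₀ / Real.sqrt (-τ) with hs₀
  have hs₀pos : 0 < s₀ := by positivity
  have harg : Real.sqrt (-τ) * s₀ = x₀ := by
    rw [hs₀]; field_simp [hsq.ne']
  have hvs₀ : v s₀ ≤ 0 := by
    rw [hv s₀, harg]
    have : k * (1 - Real.cosh x₀) ≤ k * (-(1/k)) :=
      mul_le_mul_of_nonneg_left (by linarith) (le_of_lt hkpos)
    rw [mul_neg, mul_one_div, div_self (ne_of_gt hkpos)] at this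
    linarith
  have hv0 : v 0 = 1 := by
    rw [hv 0]; simp
  have hcont : ContinuousOn v (Set.Icc 0 s₀) := by
    have : Continuous v := by
      have : v = fun s => k * (1 - Real.cosh (Real.sqrt (-τ) * s)) + 1 :=
        funext hv
      rw [this]; continuity
    exact this.continuousOn
  have := intermediate_value_Icc' (le_of_lt hs₀pos) hcont
  have h0mem : (0:ℝ) ∈ Set.Icc (v s₀) (v 0) := by
    constructor <;> simp [hv0, hvs₀]
  obtain ⟨s, _, hs⟩ := this h0mem
  exact hne s hs
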